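/- arXiv:2505.15643 — 4 statements merged into one kernel-verified Lean document; each statement's English description precedes it below -/
import Mathlib

section
/- Let w₁, w_a > 0, σ > 0, and μ₁ > μ_a. Then the infimum over λ with λ_a ≥ λ₁ of w₁(μ₁−λ₁)²/(2σ²) + w_a(μ_a−λ_a)²/(2σ²) equals (w₁ w_a)/(w₁ + w_a) · (μ₁ − μ_a)²/(2σ²). -/
/-!
With `x = μ₁ - λ₁` and `y = μ_a - λ_a`, the identity
`(w₁ + w_a)(w₁ x² + w_a y²) = w₁ w_a (x - y)² + (w₁ x + w_a y)²` bounds the objective below by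
`w₁ w_a / (w₁ + w_a) · (x - y)²`, and the constraint `λ₁ ≤ λ_a` gives `x - y ≥ μ₁ - μ_a ≥ 0`.
Both inequalities are equalities at `λ₁ = λ_a = (w₁ μ₁ + w_a μ_a) / (w₁ + w_a)`.
-/

lemma add_mul_weighted_sq_add_sq (w1 wa x y : ℝ) :
    (w1 + wa) * (w1 * x ^ 2 + wa * y ^ 2) = w1 * wa * (x - y) ^ 2 + (w1 * x + wa * y) ^ 2 := by
  ring

lemma mul_div_add_mul_sq_sub_le {w1 wa : ℝ} (hw : 0 < w1 + wa) (x y : ℝ) :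
    w1 * wa / (w1 + wa) * (x - y) ^ 2 ≤ w1 * x ^ 2 + wa * y ^ 2 := by
  rw [div_mul_eq_mul_div, div_le_iff₀ hw, mul_comm _ (w1 + wa),
    add_mul_weighted_sq_add_sq]
  exact le_add_of_nonneg_right (sq_nonneg _)

lemma mul_div_add_mul_sq_sub_le_of_le {w1 wa μ1 μa l1 la : ℝ} (hw1 : 0 < w1) (hwa : 0 < wa)
    (hμ : μa ≤ μ1) (hl : l1 ≤ la) :
    w1 * wa / (w1 + wa) * (μ1 - μa) ^ 2 ≤ w1 * (μ1 - l1) ^ 2 + wa * (μa - la) ^ 2 := by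
  have hw : 0 < w1 + wa := add_pos hw1 hwa
  have hgap : (μ1 - μa) ^ 2 ≤ ((μ1 - l1) - (μa - la)) ^ 2 := by
    exact pow_le_pow_left₀ (sub_nonneg.mpr hμ) (by linarith) 2
  calc w1 * wa / (w1 + wa) * (μ1 - μa) ^ 2
      ≤ w1 * wa / (w1 + wa) * ((μ1 - l1) - (μa - la)) ^ 2 := by gcongr
    _ ≤ w1 * (μ1 - l1) ^ 2 + wa * (μa - la) ^ 2 := mul_div_add_mul_sq_sub_le hw _ _

lemma weighted_sq_sub_weightedMean {w1 wa : ℝ} (hw : w1 + wa ≠ 0) (μ1 μa : ℝ) :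
    w1 * (μ1 - (w1 * μ1 + wa * μa) / (w1 + wa)) ^ 2 +
        wa * (μa - (w1 * μ1 + wa * μa) / (w1 + wa)) ^ 2 =
      w1 * wa / (w1 + wa) * (μ1 - μa) ^ 2 := by
  field_simp
  ring

theorem stmt_6_general (w1 wa σ μ1 μa : ℝ) (hw1 : 0 < w1) (hwa : 0 < wa)
    (hμ : μa < μ1) :
    IsGLB {z : ℝ | ∃ l1 la : ℝ, l1 ≤ la ∧
        z = w1 * (μ1 - l1) ^ 2 / (2 * σ ^ 2) + wa * (μa - la) ^ 2 / (2 * σ ^ 2)}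
      (w1 * wa / (w1 + wa) * ((μ1 - μa) ^ 2 / (2 * σ ^ 2))) := by
  constructor
  · rintro z ⟨l1, la, hl, rfl⟩
    rw [← add_div, ← mul_div_assoc]
    gcongr
    exact mul_div_add_mul_sq_sub_le_of_le hw1 hwa hμ.le hl
  · intro b hb
    set m := (w1 * μ1 + wa * μa) / (w1 + wa)
    refine hb ⟨m, m, le_rfl, ?_⟩
    rw [← add_div, ← mul_div_assoc, weighted_sq_sub_weightedMean (add_pos hw1 hwa).ne']

/-- Two-arm Gaussian constrained KL-minimization: for `w₁, w_a > 0`, `σ > 0`, `μ₁ > μ_a`,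
the infimum over `λ₁ ≤ λ_a` of `w₁(μ₁−λ₁)²/(2σ²) + w_a(μ_a−λ_a)²/(2σ²)` equals
`(w₁ w_a)/(w₁ + w_a) · (μ₁ − μ_a)²/(2σ²)`. -/
theorem stmt_6 (w1 wa σ μ1 μa : ℝ) (hw1 : 0 < w1) (hwa : 0 < wa) (hσ : 0 < σ)
    (hμ : μa < μ1) :
    IsGLB {z : ℝ | ∃ l1 la : ℝ, l1 ≤ la ∧
        z = w1 * (μ1 - l1) ^ 2 / (2 * σ ^ 2) + wa * (μa - la) ^ 2 / (2 * σ ^ 2)}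
      (w1 * wa / (w1 + wa) * ((μ1 - μa) ^ 2 / (2 * σ ^ 2))) :=
  stmt_6_general w1 wa σ μ1 μa hw1 hwa hμ
end

section
/- Let α > 0 and c₁, c₂ > 0 satisfy A := (1/α)·log c₂ + log(α/c₁) > 1. Then there exists x ≤ (α/c₁)·(A + √(2(A − 1))) such that c₁ x ≥ log(c₂ x^α). -/
/-!
Take `x = (α / c₁) · y`. Then `c₁ x = α y` and `log (c₂ x^α) = α (A + log y)`, so it suffices to
find `y > 0` with `A + log y ≤ y`. With `s = √(2(A − 1))` and `y = A + s = 1 + s + s²/2`, the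
bound `1 + s + s²/2 ≤ exp s` gives `log y ≤ s = y − A`.
-/

open Real

lemma log_add_sqrt_two_mul_sub_one_le {A : ℝ} (hA : 1 ≤ A) :
    log (A + √(2 * (A - 1))) ≤ √(2 * (A - 1)) := by
  set s := √(2 * (A - 1))
  have hs : 0 ≤ s := sqrt_nonneg _
  have hs_sq : s ^ 2 = 2 * (A - 1) := sq_sqrt (by linarith)
  have hy : A + s = 1 + s + s ^ 2 / 2 := by linarith
  rw [log_le_iff_le_exp (by linarith), hy]
  exact quadratic_le_exp_of_nonneg hs

lemma log_mul_rpow_le_of_add_log_le {α c₁ c₂ y : ℝ} (hα : 0 < α) (hc₁ : 0 < c₁) (hc₂ : 0 < c₂)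
    (hy : 0 < y) (h : (1 / α) * log c₂ + log (α / c₁) + log y ≤ y) :
    log (c₂ * ((α / c₁) * y) ^ α) ≤ c₁ * ((α / c₁) * y) := by
  have hαc₁ : 0 < α / c₁ := div_pos hα hc₁
  have hlog : log (c₂ * ((α / c₁) * y) ^ α)
      = α * ((1 / α) * log c₂ + log (α / c₁) + log y) := by
    rw [log_mul hc₂.ne' (by positivity), log_rpow (by positivity),
      log_mul hαc₁.ne' hy.ne']
    field_simp
    ring
  have hlin : c₁ * ((α / c₁) * y) = α * y := by field_simp
  rw [hlog, hlin]
  exact mul_le_mul_of_nonneg_left h hα.le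

/-- Let `α > 0` and `c₁, c₂ > 0` with `A := (1/α)·log c₂ + log(α/c₁) > 1`. Then there
exists `x ≤ (α/c₁)·(A + √(2(A−1)))` with `c₁ x ≥ log(c₂ x^α)`. -/
theorem stmt_9 (α c1 c2 : ℝ) (hα : 0 < α) (hc1 : 0 < c1) (hc2 : 0 < c2)
    (hA : 1 < (1 / α) * Real.log c2 + Real.log (α / c1)) :
    ∃ x : ℝ, 0 < x ∧
      x ≤ (α / c1) * (((1 / α) * Real.log c2 + Real.log (α / c1)) +
        Real.sqrt (2 * (((1 / α) * Real.log c2 + Real.log (α / c1)) - 1))) ∧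
      Real.log (c2 * x ^ α) ≤ c1 * x := by
  set A := (1 / α) * Real.log c2 + Real.log (α / c1)
  have hy : 0 < A + √(2 * (A - 1)) := by positivity
  refine ⟨(α / c1) * (A + √(2 * (A - 1))), by positivity, le_rfl, ?_⟩
  apply log_mul_rpow_le_of_add_log_le hα hc1 hc2 hy
  linarith [log_add_sqrt_two_mul_sub_one_le hA.le]
end

section
/- For all u > 0, the lower branch of the Lambert W function satisfies −1 − √(2u) − u < W₋₁(−e^{−u−1}) < −1 − √(2u) − (2/3)u. -/
/-!
Write `t = √(2u)`, so that `u = t² / 2`. Since `w ↦ w e^w` is strictly decreasing on `(-∞, -1]`,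
comparing `w` with `-1 - x` amounts to comparing `-e^{-u-1}` with `-(1 + x) e^{-1-x}`, i.e.
`1 + x` with `e^{x-u}`. For `x = t + u` this is `1 + t + t²/2 < e^t`, and for `x = t + 2u/3` it
is `e^{t - t²/6} < 1 + t + t²/3`, which holds because `log (1 + t + t²/3) - t + t²/6` vanishes at
`0` and has derivative `t³ / (9 (1 + t + t²/3)) > 0`.
-/

open Real Set

namespace Real

lemma one_add_add_sq_div_two_lt_exp {t : ℝ} (ht : 0 < t) : 1 + t + t ^ 2 / 2 < exp t := by
  have h := sum_le_exp_of_nonneg ht.le 4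
  simp only [Finset.sum_range_succ, Finset.sum_range_zero, Nat.factorial] at h
  norm_num at h
  nlinarith [pow_pos ht 3]

lemma one_add_add_sq_div_three_pos (t : ℝ) : 0 < 1 + t + t ^ 2 / 3 := by
  nlinarith [sq_nonneg (t + 3 / 2)]

lemma exp_sub_sq_div_six_lt {t : ℝ} (ht : 0 < t) : exp (t - t ^ 2 / 6) < 1 + t + t ^ 2 / 3 := by
  let q : ℝ → ℝ := fun x => 1 + x + x ^ 2 / 3
  let g : ℝ → ℝ := fun x => log (q x) - x + x ^ 2 / 6
  have hq : ∀ x, q x ≠ 0 := fun x => (one_add_add_sq_div_three_pos x).ne'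
  have hq' : ∀ x, HasDerivAt q (1 + 2 * x / 3) x := fun x =>
    (((hasDerivAt_id' x).const_add 1).add ((hasDerivAt_pow 2 x).div_const 3)).congr_deriv
      (by ring)
  have hg' : ∀ x, HasDerivAt g (x ^ 3 / (9 * q x)) x := fun x =>
    ((((hq' x).log (hq x)).sub (hasDerivAt_id' x)).add
      ((hasDerivAt_pow 2 x).div_const 6)).congr_deriv (by field_simp [hq x]; ring)
  have hg_mono : StrictMonoOn g (Ici 0) := by
    refine strictMonoOn_of_deriv_pos (convex_Ici 0)
      (fun x _ => (hg' x).continuousAt.continuousWithinAt) fun x hx => ?_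
    rw [interior_Ici] at hx
    rw [(hg' x).deriv]
    exact div_pos (pow_pos hx 3) (mul_pos (by norm_num) (one_add_add_sq_div_three_pos x))
  have hlog : t - t ^ 2 / 6 < log (q t) := by
    have h := hg_mono self_mem_Ici ht.le ht
    simp only [g, q] at h
    norm_num at h
    linarith
  calc exp (t - t ^ 2 / 6) < exp (log (q t)) := exp_lt_exp.2 hlog
    _ = 1 + t + t ^ 2 / 3 := exp_log (one_add_add_sq_div_three_pos t)

lemma strictAntiOn_mul_exp : StrictAntiOn (fun w => w * exp w) (Iic (-1)) := by
  refine strictAntiOn_of_deriv_neg (convex_Iic _) (by fun_prop) fun x hx => ?_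
  rw [interior_Iic] at hx
  have hd : HasDerivAt (fun w => w * exp w) ((1 + x) * exp x) x :=
    ((hasDerivAt_id' x).mul (hasDerivAt_exp x)).congr_deriv (by ring)
  rw [hd.deriv]
  exact mul_neg_of_neg_of_pos (by linarith [mem_Iio.mp hx]) (exp_pos x)

lemma mul_exp_neg_one_sub_eq (x c : ℝ) :
    (-1 - x) * exp (-1 - x) = -((1 + x) * exp (-c - 1) / exp (x - c)) := by
  rw [mul_div_assoc, ← exp_sub]
  ring_nf

lemma neg_exp_lt_mul_exp_iff (x c : ℝ) :
    -exp (-c - 1) < (-1 - x) * exp (-1 - x) ↔ 1 + x < exp (x - c) := by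
  rw [mul_exp_neg_one_sub_eq x c, neg_lt_neg_iff, div_lt_iff₀ (exp_pos _),
    mul_comm (exp _), mul_lt_mul_iff_left₀ (exp_pos _)]

lemma mul_exp_lt_neg_exp_iff (x c : ℝ) :
    (-1 - x) * exp (-1 - x) < -exp (-c - 1) ↔ exp (x - c) < 1 + x := by
  rw [mul_exp_neg_one_sub_eq x c, neg_lt_neg_iff, lt_div_iff₀ (exp_pos _), mul_comm,
    mul_lt_mul_iff_left₀ (exp_pos _)]

end Real

/-- Bounds on the lower branch of the Lambert W function: for all `u > 0`, if `w ≤ -1`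
satisfies the defining equation `w·e^w = −e^{−u−1}` (i.e. `w = W₋₁(−e^{−u−1})`), then
`−1 − √(2u) − u < w < −1 − √(2u) − (2/3)u`. -/
theorem stmt_10 (u w : ℝ) (hu : 0 < u) (hw : w ≤ -1)
    (hdef : w * Real.exp w = -Real.exp (-u - 1)) :
    -1 - Real.sqrt (2 * u) - u < w ∧ w < -1 - Real.sqrt (2 * u) - (2 / 3) * u := by
  set t := √(2 * u)
  have ht : 0 < t := sqrt_pos.2 (by linarith)
  have hu_sq : u = t ^ 2 / 2 := by rw [sq_sqrt (by linarith)]; ring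
  have hmem : ∀ x, 0 ≤ x → -1 - x ∈ Iic (-1 : ℝ) := fun x hx => mem_Iic.2 (by linarith)
  constructor
  · have hexp : 1 + (t + u) < exp (t + u - u) := by
      rw [add_sub_cancel_right, ← add_assoc, hu_sq]
      exact one_add_add_sq_div_two_lt_exp ht
    have hlt : w * exp w < (-1 - (t + u)) * exp (-1 - (t + u)) :=
      hdef ▸ (neg_exp_lt_mul_exp_iff _ u).2 hexp
    have := (strictAntiOn_mul_exp.lt_iff_gt hw (hmem _ (by positivity))).1 hlt
    linarith
  · have hexp : exp (t + 2 / 3 * u - u) < 1 + (t + 2 / 3 * u) := by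
      rw [show t + 2 / 3 * u - u = t - t ^ 2 / 6 by rw [hu_sq]; ring,
        show 1 + (t + 2 / 3 * u) = 1 + t + t ^ 2 / 3 by rw [hu_sq]; ring]
      exact exp_sub_sq_div_six_lt ht
    have hlt : (-1 - (t + 2 / 3 * u)) * exp (-1 - (t + 2 / 3 * u)) < w * exp w :=
      hdef ▸ (mul_exp_lt_neg_exp_iff _ u).2 hexp
    have := (strictAntiOn_mul_exp.lt_iff_gt (hmem _ (by positivity)) hw).1 hlt
    linarith
end

section
/- Let A > 1. If y = −W₋₁(−e^{−A}), then y satisfies y = log y + A and y ≤ A + √(2(A−1)). -/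
/-!
Taking logarithms in `y e^{-y} = e^{-A}` gives `y = log y + A`. With `u = log y` this reads
`e^u = u + A`; for `u ≥ 0` the bound `e^u ≥ 1 + u + u²/2` then forces `u² ≤ 2(A - 1)`.
-/

open Real

lemma pos_of_mul_exp_neg_eq_exp {y A : ℝ} (h : y * exp (-y) = exp (-A)) : 0 < y :=
  (pos_iff_pos_of_mul_pos (h ▸ exp_pos (-A))).2 (exp_pos (-y))

lemma eq_log_add_of_mul_exp_neg_eq_exp {y A : ℝ} (h : y * exp (-y) = exp (-A)) :
    y = log y + A := by
  have hlog := congrArg log h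
  rw [log_mul (pos_of_mul_exp_neg_eq_exp h).ne' (exp_ne_zero _), log_exp, log_exp] at hlog
  linarith

lemma le_sqrt_of_exp_eq_add {u A : ℝ} (h : exp u = u + A) : u ≤ √(2 * (A - 1)) := by
  rcases le_total u 0 with hu | hu
  · exact hu.trans (sqrt_nonneg _)
  · exact le_sqrt_of_sq_le (by linarith [quadratic_le_exp_of_nonneg hu])

theorem stmt_11_general (A y : ℝ)
    (hdef : -y * Real.exp (-y) = -Real.exp (-A)) :
    y = Real.log y + A ∧ y ≤ A + Real.sqrt (2 * (A - 1)) := by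
  have hmul : y * exp (-y) = exp (-A) := by linarith
  have hlog := eq_log_add_of_mul_exp_neg_eq_exp hmul
  refine ⟨hlog, ?_⟩
  have hexp : exp (log y) = log y + A := by
    rw [exp_log (pos_of_mul_exp_neg_eq_exp hmul), ← hlog]
  linarith [le_sqrt_of_exp_eq_add hexp]

/-- Let `A > 1` and `y = −W₋₁(−e^{−A})`, i.e. `y ≥ 1` and `(−y)·e^{−y} = −e^{−A}`.
Then `y = log y + A` and `y ≤ A + √(2(A−1))`. -/
theorem stmt_11 (A y : ℝ) (hA : 1 < A) (hy : 1 ≤ y)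
    (hdef : -y * Real.exp (-y) = -Real.exp (-A)) :
    y = Real.log y + A ∧ y ≤ A + Real.sqrt (2 * (A - 1)) :=
  stmt_11_general A y hdef
end
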